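/- Let N ≥ 1 be an integer, 0 < λ ≤ Λ, and k ≥ 1. Let μ_k⁺ and μ_k⁻ be such that the radial eigenvalue problem has a not-identically-zero solution for μ_k⁺ which is positive at 0 with exactly k−1 zeros in (0,1), and one for μ_k⁻ which is negative at 0 with exactly k−1 zeros in (0,1); assume μ_k⁺ ≠ μ_k⁻ and let μ lie strictly between μ_k⁺ and μ_k⁻. Let φ₊, φ₋ ∈ C¹([0,1]) ∩ C²((0,1]) satisfy φ±''(r) = M(−((N−1)/r)·m(φ±'(r)) − μ·φ±(r)) on (0,1] with φ₊(0) = 1, φ₋(0) = −1, φ±'(0) = 0, and suppose there exists r₀ ∈ (0,1) with φ₊(r) > 0 and φ₋(r) > 0 for all r ∈ (r₀, 1]. Then there exists a continuous function g : [0,1] → ℝ such that no u ∈ C¹([0,1]) ∩ C²((0,1]) satisfies u''(r) = M(−((N−1)/r)·m(u'(r)) − μ·u(r) + g(r)) for r ∈ (0, r₀], u''(r) ≥ M(−((N−1)/r)·m(u'(r)) − μ·u(r) + g(r)) for r ∈ (r₀, 1], u'(0) = 0, and u(1) = 0. -/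

import Mathlib

noncomputable def Mfun (lam Lam s : ℝ) : ℝ := if 0 < s then s / Lam else s / lam
noncomputable def mfun (lam Lam s : ℝ) : ℝ := if 0 < s then Lam * s else lam * s

noncomputable def D1 (u : ℝ → ℝ) : ℝ → ℝ := derivWithin u (Set.Icc 0 1)
noncomputable def D2 (u : ℝ → ℝ) : ℝ → ℝ := derivWithin (D1 u) (Set.Ioc 0 1)

/-- A (possibly trivial) solution of the radial eigenvalue problem on the unit ball. -/
def RadialEigen (N : ℕ) (lam Lam μ : ℝ) (v : ℝ → ℝ) : Prop :=
  ContDiffOn ℝ 1 v (Set.Icc 0 1) ∧ ContDiffOn ℝ 2 v (Set.Ioc 0 1) ∧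
  (∀ r ∈ Set.Ioc (0:ℝ) 1,
    D2 v r = Mfun lam Lam (-(((N:ℝ) - 1) / r) * mfun lam Lam (D1 v r) - μ * v r)) ∧
  D1 v 0 = 0 ∧ v 1 = 0

def RadialIVPSol (N : ℕ) (lam Lam : ℝ) (w : ℝ → ℝ) : Prop :=
  ContDiffOn ℝ 1 w (Set.Ici 0) ∧ ContDiffOn ℝ 2 w (Set.Ioi 0) ∧
  w 0 = 1 ∧ derivWithin w (Set.Ici 0) 0 = 0 ∧
  ∀ r ∈ Set.Ioi (0:ℝ),
    deriv (deriv w) r = Mfun lam Lam (-(((N:ℝ) - 1) / r) * mfun lam Lam (deriv w r) - w r)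


/-! Take `g r = max (r - r₀) 0`. The radial operator is positively homogeneous, so every `c φ±`
with `c ≥ 0` is again a solution. On `[0, r₀]`, where `g = 0`, uniqueness for the radial initial
value problem gives `u = c φ`, with `φ = φ₊` or `φ₋` according to the sign of `u 0` and
`c = |u 0|`. On `(r₀, 1]` the function `u` is a strict subsolution leaving `c φ` tangentially at
`r₀`, so it lies strictly above `c φ` just after `r₀`. The quotient `w = (u - c φ) / φ` then tends
to `0` at `r₀` (uniqueness again: `φ` cannot vanish to second order at `r₀`), is positive just
after `r₀` and nonpositive at `1`, since `u 1 = 0`. At an interior maximum `z` of `w` the solution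
`(c + w z) φ` touches `u` from above, which the strict inequality forbids. -/

open Set Filter Topology

section mfun

variable {lam Lam : ℝ}

lemma mfun_mul_of_nonneg {c : ℝ} (hc : 0 ≤ c) (s : ℝ) :
    mfun lam Lam (c * s) = c * mfun lam Lam s := by
  rcases hc.eq_or_lt with rfl | hc
  · simp [mfun]
  · simp only [mfun, mul_pos_iff_of_pos_left hc]
    split_ifs <;> ring

lemma mul_sub_le_mfun_sub (hlL : lam ≤ Lam) {x y : ℝ} (hxy : x ≤ y) :
    lam * (y - x) ≤ mfun lam Lam y - mfun lam Lam x := by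
  unfold mfun
  split_ifs <;> nlinarith

lemma mfun_monotone (hlam : 0 ≤ lam) (hlL : lam ≤ Lam) : Monotone (mfun lam Lam) :=
  fun x y hxy => by nlinarith [mul_sub_le_mfun_sub hlL hxy]

lemma mfun_Mfun (hlam : 0 < lam) (hLam : 0 < Lam) (s : ℝ) :
    mfun lam Lam (Mfun lam Lam s) = s := by
  unfold mfun Mfun
  split_ifs with hs h h
  · field_simp
  · exact absurd (div_pos hs hLam) h
  · exact absurd h (div_nonpos_of_nonpos_of_nonneg (not_lt.1 hs) hlam.le).not_gt
  · field_simp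

lemma le_mfun_of_Mfun_le (hlam : 0 < lam) (hlL : lam ≤ Lam) {s x : ℝ}
    (h : Mfun lam Lam s ≤ x) : s ≤ mfun lam Lam x :=
  mfun_Mfun hlam (hlam.trans_le hlL) s ▸ mfun_monotone hlam.le hlL h

/-- `(x₀, x₁, x₂)` and `(y₀, y₁, y₂)` are the values and first two derivatives of a subsolution
and of a solution of the radial equation at one point. -/
lemma add_mul_sub_le_of_mfun_le (hlam : 0 ≤ lam) (hlL : lam ≤ Lam)
    {A μ g x₀ x₁ x₂ y₀ y₁ y₂ : ℝ} (hA : 0 ≤ A)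
    (hx : -A * mfun lam Lam x₁ - μ * x₀ + g ≤ mfun lam Lam x₂)
    (hy : mfun lam Lam y₂ = -A * mfun lam Lam y₁ - μ * y₀) (h₁ : x₁ ≤ y₁) (h₂ : x₂ ≤ y₂) :
    g + lam * (y₂ - x₂) ≤ μ * (x₀ - y₀) := by
  have h₁' := mul_nonneg hA (sub_nonneg.2 (mfun_monotone hlam hlL h₁))
  linarith [mul_sub_le_mfun_sub hlL h₂]

end mfun

lemma HasDerivAt.nonpos_of_isMinOn_Icc {f : ℝ → ℝ} {d x y : ℝ} (hyx : y < x)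
    (hf : HasDerivAt f d x) (hmin : IsMinOn f (Icc y x) x) : d ≤ 0 := by
  have hseg : segment ℝ x y ⊆ Icc y x := by
    rw [segment_symm, segment_eq_Icc hyx.le]
  have := hmin.localize.hasFDerivWithinAt_nonneg hf.hasDerivWithinAt.hasFDerivWithinAt
    (sub_mem_posTangentConeAt_of_segment_subset hseg)
  simp only [ContinuousLinearMap.toSpanSingleton_apply, smul_eq_mul] at this
  nlinarith

lemma exists_mem_Ioc_isMinOn_Icc {f : ℝ → ℝ} {a b : ℝ} (hab : a < b)
    (hf : ContinuousOn f (Icc a b)) (hfb : f b ≤ f a) :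
    ∃ c ∈ Ioc a b, IsMinOn f (Icc a b) c := by
  obtain ⟨c, hc, hmin⟩ := isCompact_Icc.exists_isMinOn (nonempty_Icc.2 hab.le) hf
  rcases hc.1.eq_or_lt with rfl | hac
  · exact ⟨b, right_mem_Ioc.2 hab, fun x hx => hfb.trans (hmin hx)⟩
  · exact ⟨c, ⟨hac, hc.2⟩, hmin⟩

lemma IsLocalMax.deriv_deriv_nonpos {f : ℝ → ℝ} {x : ℝ} (h : IsLocalMax f x)
    (hf : ContinuousAt f x) : deriv (deriv f) x ≤ 0 := by
  by_contra! hpos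
  have hconst : f =ᶠ[𝓝 x] fun _ => f x :=
    ((isLocalMin_of_deriv_deriv_pos hpos h.deriv_eq_zero hf).and h).mono
      fun y hy => le_antisymm hy.2 hy.1
  have : deriv f =ᶠ[𝓝 x] fun _ => 0 := by simpa using hconst.deriv
  simp [this.deriv_eq] at hpos

lemma IsLocalMax.hasDerivAt_deriv_nonpos {f f' : ℝ → ℝ} {x f'' : ℝ} (h : IsLocalMax f x)
    (hf : ∀ᶠ y in 𝓝 x, HasDerivAt f (f' y) y) (hf' : HasDerivAt f' f'' x) : f'' ≤ 0 := by
  have hderiv : deriv f =ᶠ[𝓝 x] f' := hf.mono fun y hy => hy.deriv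
  rw [← hf'.deriv, ← hderiv.deriv_eq]
  exact h.deriv_deriv_nonpos hf.self_of_nhds.continuousAt

lemma tendsto_div_of_hasDerivWithinAt_zero {f g : ℝ → ℝ} {s : Set ℝ} {x g' : ℝ}
    (hf : HasDerivWithinAt f 0 s x) (hfx : f x = 0) (hg : HasDerivWithinAt g g' s x)
    (hg0 : g x ≠ 0 ∨ g' ≠ 0) : Tendsto (fun y => f y / g y) (𝓝[s \ {x}] x) (𝓝 0) := by
  by_cases hgx : g x = 0
  · have hslope := (hasDerivWithinAt_iff_tendsto_slope.1 hf).div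
      (hasDerivWithinAt_iff_tendsto_slope.1 hg) (hg0.resolve_left (not_not.2 hgx))
    rw [zero_div] at hslope
    refine hslope.congr' (eventually_nhdsWithin_of_forall fun y hy => ?_)
    have hyx : y - x ≠ 0 := sub_ne_zero.2 hy.2
    simp only [Pi.div_apply, slope_def_field, hfx, hgx, sub_zero]
    field_simp
  · rw [← zero_div (g x), ← hfx]
    exact (hf.continuousWithinAt.tendsto.div hg.continuousWithinAt.tendsto hgx).mono_left
      (nhdsWithin_mono x sdiff_subset)

lemma exists_isLocalMax_of_tendsto_nhdsGT {f : ℝ → ℝ} {a b x l : ℝ}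
    (hf : ContinuousOn f (Ioc a b)) (hlim : Tendsto f (𝓝[>] a) (𝓝 l)) (hx : x ∈ Ioc a b)
    (hb : f b ≤ l) (hlx : l < f x) : ∃ z ∈ Ioo a b, IsLocalMax f z ∧ f x ≤ f z := by
  obtain ⟨u, hau, hu⟩ := mem_nhdsGT_iff_exists_Ioc_subset.1
    (hlim.eventually (eventually_lt_nhds hlx))
  set δ := min u ((a + x) / 2)
  have haδ : a < δ := lt_min hau (by linarith [hx.1])
  have hδx : δ < x := (min_le_right _ _).trans_lt (by linarith [hx.1])
  have hsub : Icc δ b ⊆ Ioc a b := Icc_subset_Ioc haδ le_rfl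
  obtain ⟨z, hz, hmax⟩ := isCompact_Icc.exists_isMaxOn (nonempty_Icc.2 (hδx.le.trans hx.2))
    (hf.mono hsub)
  have hxz : f x ≤ f z := hmax ⟨hδx.le, hx.2⟩
  have hδz : δ ≠ z := by
    rintro rfl
    exact (hu ⟨haδ, min_le_left _ _⟩ : f δ < f x).not_ge hxz
  have hzb : z ≠ b := by
    rintro rfl
    linarith
  exact ⟨z, ⟨haδ.trans_le hz.1, hz.2.lt_of_ne hzb⟩, hmax.isLocalMax
    (Icc_mem_nhds (hz.1.lt_of_ne hδz) (hz.2.lt_of_ne hzb)), hxz⟩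

/-- `w''` is only required on the open interval: at `r = 0` the radial equation is singular. -/
structure HasDerivTwiceOn (w w' w'' : ℝ → ℝ) (a b : ℝ) : Prop where
  hasDerivWithinAt : ∀ x ∈ Icc a b, HasDerivWithinAt w (w' x) (Icc a b) x
  continuousOn_deriv : ContinuousOn w' (Icc a b)
  hasDerivAt_deriv : ∀ x ∈ Ioo a b, HasDerivAt w' (w'' x) x

namespace HasDerivTwiceOn

variable {w w' w'' v v' v'' : ℝ → ℝ} {a b : ℝ}

lemma continuousOn (h : HasDerivTwiceOn w w' w'' a b) : ContinuousOn w (Icc a b) :=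
  fun x hx => (h.hasDerivWithinAt x hx).continuousWithinAt

lemma hasDerivAt (h : HasDerivTwiceOn w w' w'' a b) {x : ℝ} (hx : x ∈ Ioo a b) :
    HasDerivAt w (w' x) x :=
  (h.hasDerivWithinAt x (Ioo_subset_Icc_self hx)).hasDerivAt (Icc_mem_nhds hx.1 hx.2)

lemma eventually_hasDerivAt (h : HasDerivTwiceOn w w' w'' a b) {x : ℝ} (hx : x ∈ Ioo a b) :
    ∀ᶠ y in 𝓝 x, HasDerivAt w (w' y) y :=
  eventually_of_mem (Ioo_mem_nhds hx.1 hx.2) fun _ hy => h.hasDerivAt hy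

lemma mono (h : HasDerivTwiceOn w w' w'' a b) {a' b' : ℝ} (ha : a ≤ a') (hb : b' ≤ b) :
    HasDerivTwiceOn w w' w'' a' b' where
  hasDerivWithinAt x hx :=
    (h.hasDerivWithinAt x (Icc_subset_Icc ha hb hx)).mono (Icc_subset_Icc ha hb)
  continuousOn_deriv := h.continuousOn_deriv.mono (Icc_subset_Icc ha hb)
  hasDerivAt_deriv x hx := h.hasDerivAt_deriv x (Ioo_subset_Ioo ha hb hx)

lemma const_mul (h : HasDerivTwiceOn w w' w'' a b) (c : ℝ) :
    HasDerivTwiceOn (fun x => c * w x) (fun x => c * w' x) (fun x => c * w'' x) a b where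
  hasDerivWithinAt x hx := (h.hasDerivWithinAt x hx).const_mul c
  continuousOn_deriv := continuousOn_const.mul h.continuousOn_deriv
  hasDerivAt_deriv x hx := (h.hasDerivAt_deriv x hx).const_mul c

lemma sub (hw : HasDerivTwiceOn w w' w'' a b) (hv : HasDerivTwiceOn v v' v'' a b) :
    HasDerivTwiceOn (fun x => w x - v x) (fun x => w' x - v' x) (fun x => w'' x - v'' x) a b where
  hasDerivWithinAt x hx := (hw.hasDerivWithinAt x hx).sub (hv.hasDerivWithinAt x hx)
  continuousOn_deriv := hw.continuousOn_deriv.sub hv.continuousOn_deriv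
  hasDerivAt_deriv x hx := (hw.hasDerivAt_deriv x hx).sub (hv.hasDerivAt_deriv x hx)

lemma of_contDiffOn (h₁ : ContDiffOn ℝ 1 w (Icc 0 1)) (h₂ : ContDiffOn ℝ 2 w (Ioc 0 1)) :
    HasDerivTwiceOn w (D1 w) (D2 w) 0 1 where
  hasDerivWithinAt x hx := ((h₁.differentiableOn one_ne_zero) x hx).hasDerivWithinAt
  continuousOn_deriv := h₁.continuousOn_derivWithin (uniqueDiffOn_Icc one_pos) le_rfl
  hasDerivAt_deriv x hx := by
    have hIoc : ∀ y ∈ Ioo (0:ℝ) 1, Ioc (0:ℝ) 1 ∈ 𝓝 y := fun y hy =>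
      mem_of_superset (Ioo_mem_nhds hy.1 hy.2) Ioo_subset_Ioc_self
    have hD1 : D1 w =ᶠ[𝓝 x] derivWithin w (Ioc 0 1) := by
      filter_upwards [Ioo_mem_nhds hx.1 hx.2] with y hy
      rw [D1, derivWithin_of_mem_nhds (Icc_mem_nhds hy.1 hy.2),
        derivWithin_of_mem_nhds (hIoc y hy)]
    have hdiff : DifferentiableAt ℝ (derivWithin w (Ioc 0 1)) x :=
      ((h₂.derivWithin (uniqueDiffOn_Ioc 0 1) (by norm_num) x (Ioo_subset_Ioc_self hx)).contDiffAt
        (hIoc x hx)).differentiableAt one_ne_zero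
    rw [D2, derivWithin_of_mem_nhds (hIoc x hx), hD1.deriv_eq]
    exact hdiff.hasDerivAt.congr_of_eventuallyEq hD1

end HasDerivTwiceOn

/-- The radial equation `w'' = M(-A m(w') - μ w)`, written as `m(w'') = -A m(w') - μ w` since `m`
inverts `M`; in the theorem `A r = (N - 1) / r`. -/
def RadialEqOn (lam Lam μ : ℝ) (A w w' w'' : ℝ → ℝ) (a b : ℝ) : Prop :=
  ∀ x ∈ Ioo a b, mfun lam Lam (w'' x) = -A x * mfun lam Lam (w' x) - μ * w x

namespace RadialEqOn

variable {lam Lam μ : ℝ} {A w w' w'' : ℝ → ℝ} {a b : ℝ}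

lemma mono (h : RadialEqOn lam Lam μ A w w' w'' a b) {a' b' : ℝ} (ha : a ≤ a')
    (hb : b' ≤ b) : RadialEqOn lam Lam μ A w w' w'' a' b' :=
  fun x hx => h x (Ioo_subset_Ioo ha hb hx)

lemma const_mul (h : RadialEqOn lam Lam μ A w w' w'' a b) {c : ℝ} (hc : 0 ≤ c) :
    RadialEqOn lam Lam μ A (fun x => c * w x) (fun x => c * w' x) (fun x => c * w'' x) a b :=
  fun x hx => by
    rw [mfun_mul_of_nonneg hc, mfun_mul_of_nonneg hc, h x hx]
    ring

end RadialEqOn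

section uniqueness

variable {lam Lam μ : ℝ} {A : ℝ → ℝ} {a b : ℝ} {w₁ w₁' w₁'' w₂ w₂' w₂'' : ℝ → ℝ}

/- Where `w₁' < w₂'` the terms `-A m(wᵢ')` work in favour of `w₁'' ≥ w₂''`, so only `μ (w₁ - w₂)`
can make `w₂' - w₁'` grow. Hence no bound on `A` is needed, which matters since `(N - 1) / r` is
unbounded near `0`. -/
lemma mul_sub_deriv_le_of_radial (hlam : 0 ≤ lam) (hlL : lam ≤ Lam)
    (hA : ∀ x ∈ Ioo a b, 0 ≤ A x)
    (h₁ : HasDerivTwiceOn w₁ w₁' w₁'' a b) (h₂ : HasDerivTwiceOn w₂ w₂' w₂'' a b)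
    (he₁ : RadialEqOn lam Lam μ A w₁ w₁' w₁'' a b) (he₂ : RadialEqOn lam Lam μ A w₂ w₂' w₂'' a b)
    {α t D : ℝ} (hα : a ≤ α) (hαt : α ≤ t) (htb : t ≤ b) (hα' : w₁' α = w₂' α)
    (hD : ∀ x ∈ Icc α t, |w₁ x - w₂ x| ≤ D) :
    lam * (w₂' t - w₁' t) ≤ |μ| * D * (t - α) := by
  have hD0 : 0 ≤ D := (abs_nonneg _).trans (hD α ⟨le_rfl, hαt⟩)
  have hRHS : 0 ≤ |μ| * D * (t - α) := by have := sub_nonneg.2 hαt; positivity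
  rcases le_or_gt (w₂' t) (w₁' t) with hle | hlt
  · nlinarith
  set e := fun x => w₁' x - w₂' x
  have he : ContinuousOn e (Icc a b) := h₁.continuousOn_deriv.sub h₂.continuousOn_deriv
  -- `t₀` is the last point before `t` where `w₁' ≥ w₂'`
  obtain ⟨t₀, ⟨ht₀, he₀⟩, hlast⟩ : ∃ t₀, IsGreatest {x ∈ Icc α t | 0 ≤ e x} t₀ := by
    refine IsCompact.exists_isGreatest ?_ ⟨α, ⟨le_rfl, hαt⟩, by simp [e, hα']⟩
    exact isCompact_Icc.of_isClosed_subset ((he.mono (Icc_subset_Icc hα htb))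
      |>.preimage_isClosed_of_isClosed isClosed_Icc isClosed_Ici) inter_subset_left
  have ht₀t : t₀ < t := ht₀.2.lt_of_ne (by rintro rfl; simp only [e] at he₀; linarith)
  have hsub : Ioo t₀ t ⊆ Ioo a b := Ioo_subset_Ioo (hα.trans ht₀.1) htb
  obtain ⟨ξ, hξ, hslope⟩ := exists_hasDerivAt_eq_slope e (fun x => w₁'' x - w₂'' x) ht₀t
    (he.mono (Icc_subset_Icc (hα.trans ht₀.1) htb))
    fun x hx => (h₁.hasDerivAt_deriv x (hsub hx)).sub (h₂.hasDerivAt_deriv x (hsub hx))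
  have heξ : e ξ < 0 := by
    by_contra! h
    exact (hlast ⟨⟨ht₀.1.trans hξ.1.le, hξ.2.le⟩, h⟩).not_gt hξ.1
  simp only [e] at heξ he₀ hslope
  rw [eq_div_iff (sub_pos.2 ht₀t).ne'] at hslope
  have hξ'' : w₁'' ξ ≤ w₂'' ξ := by nlinarith
  have hcmp := add_mul_sub_le_of_mfun_le (g := 0) (x₀ := w₁ ξ) (x₁ := w₁' ξ) (x₂ := w₁'' ξ)
    hlam hlL (hA ξ (hsub hξ)) (by rw [add_zero, he₁ ξ (hsub hξ)]) (he₂ ξ (hsub hξ))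
    (sub_neg.1 heξ).le hξ''
  have hμD : μ * (w₁ ξ - w₂ ξ) ≤ |μ| * D :=
    calc μ * (w₁ ξ - w₂ ξ) ≤ |μ| * |w₁ ξ - w₂ ξ| := by rw [← abs_mul]; exact le_abs_self _
      _ ≤ |μ| * D := by gcongr; exact hD ξ ⟨ht₀.1.trans hξ.1.le, hξ.2.le⟩
  calc lam * (w₂' t - w₁' t) ≤ lam * (w₂'' ξ - w₁'' ξ) * (t - t₀) := by nlinarith
    _ ≤ |μ| * D * (t - t₀) := mul_le_mul_of_nonneg_right (by linarith) (by linarith)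
    _ ≤ |μ| * D * (t - α) := by gcongr; exact ht₀.1

lemma radial_solution_unique_of_sq_le (hlam : 0 < lam) (hlL : lam ≤ Lam)
    (hA : ∀ x ∈ Ioo a b, 0 ≤ A x)
    (h₁ : HasDerivTwiceOn w₁ w₁' w₁'' a b) (h₂ : HasDerivTwiceOn w₂ w₂' w₂'' a b)
    (he₁ : RadialEqOn lam Lam μ A w₁ w₁' w₁'' a b) (he₂ : RadialEqOn lam Lam μ A w₂ w₂' w₂'' a b)
    {α ρ : ℝ} (hα : a ≤ α) (hαρ : α ≤ ρ) (hρb : ρ ≤ b)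
    (hsmall : 2 * |μ| * (ρ - α) ^ 2 ≤ lam) (h0 : w₁ α = w₂ α) (h0' : w₁' α = w₂' α) :
    ∀ x ∈ Icc α ρ, w₁ x = w₂ x ∧ w₁' x = w₂' x := by
  have hsub : Icc α ρ ⊆ Icc a b := Icc_subset_Icc hα hρb
  obtain ⟨z, hz, hmax⟩ := isCompact_Icc.exists_isMaxOn (nonempty_Icc.2 hαρ)
    ((h₁.continuousOn_deriv.sub h₂.continuousOn_deriv).mono hsub).abs
  set ω := |w₁' z - w₂' z|
  have hω0 : 0 ≤ ω := abs_nonneg _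
  have hd : ∀ x ∈ Icc α ρ, |w₁ x - w₂ x| ≤ ω * (ρ - α) := by
    intro x hx
    have := (convex_Icc α ρ).norm_image_sub_le_of_norm_hasDerivWithin_le (C := ω)
      (fun y hy => ((h₁.sub h₂).hasDerivWithinAt y (hsub hy)).mono hsub)
      (fun y hy => hmax hy) (left_mem_Icc.2 hαρ) hx
    simp only [h0, sub_self, sub_zero, Real.norm_eq_abs,
      abs_of_nonneg (sub_nonneg.2 hx.1)] at this
    exact this.trans (mul_le_mul_of_nonneg_left (by linarith [hx.2]) hω0)
  have he : ∀ x ∈ Icc α ρ, lam * |w₁' x - w₂' x| ≤ lam * ω / 2 := by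
    intro x hx
    have hK : |μ| * (ω * (ρ - α)) * (x - α) ≤ lam * ω / 2 := by
      have := mul_le_mul_of_nonneg_left hsmall hω0
      have : |μ| * (ω * (ρ - α)) * (x - α) ≤ |μ| * (ω * (ρ - α)) * (ρ - α) :=
        mul_le_mul_of_nonneg_left (by linarith [hx.2])
          (mul_nonneg (abs_nonneg _) (mul_nonneg hω0 (sub_nonneg.2 hαρ)))
      nlinarith
    have hD : ∀ y ∈ Icc α x, |w₁ y - w₂ y| ≤ ω * (ρ - α) := fun y hy =>
      hd y ⟨hy.1, hy.2.trans hx.2⟩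
    have h12 := mul_sub_deriv_le_of_radial hlam.le hlL hA h₁ h₂ he₁ he₂ hα hx.1
      (hx.2.trans hρb) h0' hD
    have h21 := mul_sub_deriv_le_of_radial hlam.le hlL hA h₂ h₁ he₂ he₁ hα hx.1
      (hx.2.trans hρb) h0'.symm fun y hy => abs_sub_comm (w₂ y) (w₁ y) ▸ hD y hy
    rcases abs_cases (w₁' x - w₂' x) with ⟨h, -⟩ | ⟨h, -⟩ <;> rw [h] <;> linarith
  have hω : ω = 0 := by
    have := he z hz
    nlinarith
  intro x hx
  refine ⟨sub_eq_zero.1 (abs_nonpos_iff.1 ?_), sub_eq_zero.1 (abs_nonpos_iff.1 ?_)⟩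
  · simpa [hω] using hd x hx
  · exact hω ▸ (hmax hx : |w₁' x - w₂' x| ≤ ω)

theorem radial_solution_unique (hlam : 0 < lam) (hlL : lam ≤ Lam)
    (hA : ∀ x ∈ Ioo a b, 0 ≤ A x)
    (h₁ : HasDerivTwiceOn w₁ w₁' w₁'' a b) (h₂ : HasDerivTwiceOn w₂ w₂' w₂'' a b)
    (he₁ : RadialEqOn lam Lam μ A w₁ w₁' w₁'' a b) (he₂ : RadialEqOn lam Lam μ A w₂ w₂' w₂'' a b)
    (h0 : w₁ a = w₂ a) (h0' : w₁' a = w₂' a) :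
    ∀ x ∈ Icc a b, w₁ x = w₂ x ∧ w₁' x = w₂' x := by
  refine IsClosed.Icc_subset_of_forall_mem_nhdsWithin
    (s := {x | w₁ x = w₂ x ∧ w₁' x = w₂' x}) ?_ ⟨h0, h0'⟩ ?_
  · convert isClosed_Icc.isClosed_eq (h₁.continuousOn.prodMk h₁.continuousOn_deriv)
      (h₂.continuousOn.prodMk h₂.continuousOn_deriv) using 1
    ext x
    simp only [mem_inter_iff, Prod.ext_iff]
    exact and_comm
  · rintro x ⟨hxS, hx⟩
    have hcont : Continuous fun ρ => 2 * |μ| * (ρ - x) ^ 2 := by fun_prop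
    have hev : ∀ᶠ ρ in 𝓝[>] x, (ρ ≤ b ∧ 2 * |μ| * (ρ - x) ^ 2 < lam) ∧ x < ρ :=
      (((show ∀ᶠ ρ in 𝓝 x, ρ ≤ b from Iic_mem_nhds hx.2).and
        ((hcont.tendsto x).eventually (eventually_lt_nhds (by simpa using hlam)))).filter_mono
          nhdsWithin_le_nhds).and self_mem_nhdsWithin
    obtain ⟨ρ, ⟨hρb, hρsmall⟩, hxρ⟩ := hev.exists
    exact mem_nhdsGT_iff_exists_Ioo_subset.2 ⟨ρ, hxρ, fun y hy =>
      radial_solution_unique_of_sq_le hlam hlL hA h₁ h₂ he₁ he₂ hx.1 hxρ.le hρb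
        hρsmall.le hxS.1 hxS.2 y ⟨hy.1.le, hy.2.le⟩⟩

end uniqueness

section comparison

variable {lam Lam μ : ℝ} {A : ℝ → ℝ} {a b r₀ : ℝ} {u u' u'' ψ ψ' ψ'' φ φ' φ'' : ℝ → ℝ}

lemma radial_not_isLocalMax_sub (hlam : 0 ≤ lam) (hlL : lam ≤ Lam)
    (hu : HasDerivTwiceOn u u' u'' a b) (hψ : HasDerivTwiceOn ψ ψ' ψ'' a b) {x g : ℝ}
    (hx : x ∈ Ioo a b) (hA : 0 ≤ A x) (hg : 0 < g)
    (hueq : -A x * mfun lam Lam (u' x) - μ * u x + g ≤ mfun lam Lam (u'' x))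
    (hψeq : mfun lam Lam (ψ'' x) = -A x * mfun lam Lam (ψ' x) - μ * ψ x) (hux : u x = ψ x) :
    ¬ IsLocalMax (fun y => u y - ψ y) x := by
  intro hmax
  have h' : u' x = ψ' x := sub_eq_zero.1 (hmax.hasDerivAt_eq_zero ((hu.sub hψ).hasDerivAt hx))
  have h'' : u'' x ≤ ψ'' x := sub_nonpos.1 (hmax.hasDerivAt_deriv_nonpos
    ((hu.sub hψ).eventually_hasDerivAt hx) ((hu.sub hψ).hasDerivAt_deriv x hx))
  have := add_mul_sub_le_of_mfun_le hlam hlL hA hueq hψeq h'.le h''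
  rw [hux, sub_self, mul_zero] at this
  nlinarith

/- If `u ≤ ψ` at some `x`, then `u' - ψ'` has a nonpositive minimum over `[r₀, z]` at some
`z ∈ (r₀, x]`, and the comparison at `z` gives `z - r₀ ≤ μ (u z - ψ z) = o(z - r₀)`. -/
lemma eventually_lt_of_radial_subsolution (hlam : 0 ≤ lam) (hlL : lam ≤ Lam)
    (hA : ∀ x ∈ Ioo r₀ b, 0 ≤ A x) (hr₀b : r₀ < b)
    (hu : HasDerivTwiceOn u u' u'' r₀ b) (hψ : HasDerivTwiceOn ψ ψ' ψ'' r₀ b)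
    (hueq : ∀ x ∈ Ioo r₀ b,
      -A x * mfun lam Lam (u' x) - μ * u x + (x - r₀) ≤ mfun lam Lam (u'' x))
    (hψeq : RadialEqOn lam Lam μ A ψ ψ' ψ'' r₀ b) (h0 : u r₀ = ψ r₀) (h0' : u' r₀ = ψ' r₀) :
    ∀ᶠ x in 𝓝[>] r₀, ψ x < u x := by
  have hh := hu.sub hψ
  set ε := 1 / (2 * (|μ| + 1))
  have hε : 0 < ε := by positivity
  have hμε : |μ| * ε < 1 := by
    rw [mul_one_div, div_lt_one (by positivity)]
    linarith [abs_nonneg μ]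
  have hsmall : ∀ᶠ x in 𝓝[>] r₀, |u x - ψ x| ≤ ε * (x - r₀) := by
    have := (hasDerivWithinAt_iff_isLittleO.1
      (hh.hasDerivWithinAt r₀ (left_mem_Icc.2 hr₀b.le))).def hε
    rw [← nhdsWithin_Ioo_eq_nhdsGT hr₀b]
    filter_upwards [nhdsWithin_mono _ Ioo_subset_Icc_self this, self_mem_nhdsWithin]
      with x hx hxI
    simpa [h0, h0', Real.norm_eq_abs, abs_of_pos (sub_pos.2 hxI.1)] using hx
  obtain ⟨ρ, hρ, hρsub⟩ := mem_nhdsGT_iff_exists_Ioc_subset.1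
    (hsmall.and (nhdsWithin_le_nhds (Iio_mem_nhds hr₀b)))
  refine mem_of_superset (Ioc_mem_nhdsGT hρ) fun x hx => ?_
  have hxb : x < b := (hρsub hx).2
  show ψ x < u x
  by_contra! hux
  obtain ⟨ξ, hξ, hslope⟩ := exists_hasDerivAt_eq_slope (fun y => u y - ψ y)
    (fun y => u' y - ψ' y) hx.1 (hh.continuousOn.mono (Icc_subset_Icc le_rfl hxb.le))
    fun y hy => hh.hasDerivAt ⟨hy.1, hy.2.trans hxb⟩
  have hξ' : u' ξ - ψ' ξ ≤ u' r₀ - ψ' r₀ := by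
    rw [hslope, h0, h0', sub_self, sub_self, sub_zero]
    exact div_nonpos_of_nonpos_of_nonneg (by linarith) (by linarith [hx.1])
  obtain ⟨z, hz, hmin⟩ := exists_mem_Ioc_isMinOn_Icc hξ.1
    (hh.continuousOn_deriv.mono (Icc_subset_Icc le_rfl (hξ.2.trans hxb).le)) hξ'
  have hzb : z ∈ Ioo r₀ b := ⟨hz.1, hz.2.trans_lt (hξ.2.trans hxb)⟩
  have h1 : u' z ≤ ψ' z := by
    linarith [isMinOn_iff.1 hmin ξ (right_mem_Icc.2 hξ.1.le)]
  have h2 : u'' z ≤ ψ'' z := sub_nonpos.1 ((hh.hasDerivAt_deriv z hzb).nonpos_of_isMinOn_Icc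
    hz.1 (hmin.on_subset (Icc_subset_Icc le_rfl hz.2)))
  have hcmp := add_mul_sub_le_of_mfun_le hlam hlL (hA z hzb) (hueq z hzb) (hψeq z hzb) h1 h2
  have hμz : μ * (u z - ψ z) ≤ |μ| * (ε * (z - r₀)) :=
    calc μ * (u z - ψ z) ≤ |μ| * |u z - ψ z| := by rw [← abs_mul]; exact le_abs_self _
      _ ≤ |μ| * (ε * (z - r₀)) := mul_le_mul_of_nonneg_left
        (hρsub ⟨hz.1, hz.2.trans (hξ.2.le.trans hx.2)⟩).1 (abs_nonneg μ)
  nlinarith [mul_nonneg hlam (sub_nonneg.2 h2), sub_pos.2 hz.1]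

theorem lt_of_radial_subsolution (hlam : 0 ≤ lam) (hlL : lam ≤ Lam)
    (hA : ∀ x ∈ Ioo r₀ b, 0 ≤ A x) (hr₀b : r₀ < b)
    (hφ : HasDerivTwiceOn φ φ' φ'' r₀ b) (hφeq : RadialEqOn lam Lam μ A φ φ' φ'' r₀ b)
    (hφpos : ∀ x ∈ Ioc r₀ b, 0 < φ x) (hφ0 : φ r₀ ≠ 0 ∨ φ' r₀ ≠ 0)
    (hu : HasDerivTwiceOn u u' u'' r₀ b)
    (hueq : ∀ x ∈ Ioo r₀ b,
      -A x * mfun lam Lam (u' x) - μ * u x + (x - r₀) ≤ mfun lam Lam (u'' x))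
    {c : ℝ} (hc : 0 ≤ c) (h0 : u r₀ = c * φ r₀) (h0' : u' r₀ = c * φ' r₀) :
    c * φ b < u b := by
  have hψ := hφ.const_mul c
  set w := fun x => (u x - c * φ x) / φ x
  obtain ⟨ρ, hρ, hρb⟩ := ((eventually_lt_of_radial_subsolution hlam hlL hA hr₀b hu hψ hueq
    (hφeq.const_mul hc) h0 h0').and (Ioo_mem_nhdsGT hr₀b)).exists
  have hlim : Tendsto w (𝓝[>] r₀) (𝓝 0) := by
    have := tendsto_div_of_hasDerivWithinAt_zero
      (by simpa [h0'] using (hu.sub hψ).hasDerivWithinAt r₀ (left_mem_Icc.2 hr₀b.le))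
      (by simp [h0]) (hφ.hasDerivWithinAt r₀ (left_mem_Icc.2 hr₀b.le)) hφ0
    rwa [Icc_sdiff_left, nhdsWithin_Ioc_eq_nhdsGT hr₀b] at this
  by_contra! hb
  have hwρ : 0 < w ρ := div_pos (by linarith) (hφpos ρ ⟨hρb.1, hρb.2.le⟩)
  have hwc : ContinuousOn w (Ioc r₀ b) :=
    ((hu.sub hψ).continuousOn.mono Ioc_subset_Icc_self).div
      (hφ.continuousOn.mono Ioc_subset_Icc_self) fun x hx => (hφpos x hx).ne'
  obtain ⟨z, hz, hzmax, hρz⟩ := exists_isLocalMax_of_tendsto_nhdsGT hwc hlim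
    ⟨hρb.1, hρb.2.le⟩
    (div_nonpos_of_nonpos_of_nonneg (by linarith) (hφpos b (right_mem_Ioc.2 hr₀b)).le) hwρ
  -- `u` touches `(c + w z) φ` from below at `z`
  have hwz : w z * φ z = u z - c * φ z := div_mul_cancel₀ _ (hφpos z ⟨hz.1, hz.2.le⟩).ne'
  refine radial_not_isLocalMax_sub (ψ := fun x => (c + w z) * φ x) hlam hlL hu
    (hφ.const_mul (c + w z)) hz (hA z hz) (sub_pos.2 hz.1) (hueq z hz)
    ((hφeq.const_mul (by linarith)) z hz) (by linarith) ?_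
  filter_upwards [hzmax, Ioo_mem_nhds hz.1 hz.2] with y hy hyI
  have : u y - c * φ y ≤ w z * φ y := (div_le_iff₀ (hφpos y ⟨hyI.1, hyI.2.le⟩)).1 hy
  linarith

theorem lt_of_radial_mixed (hlam : 0 < lam) (hlL : lam ≤ Lam)
    (hA : ∀ x ∈ Ioo a b, 0 ≤ A x) (hr₀ : r₀ ∈ Ioo a b)
    (hφ : HasDerivTwiceOn φ φ' φ'' a b) (hφeq : RadialEqOn lam Lam μ A φ φ' φ'' a b)
    (hφpos : ∀ x ∈ Ioc r₀ b, 0 < φ x)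
    (hu : HasDerivTwiceOn u u' u'' a b) (hueq : RadialEqOn lam Lam μ A u u' u'' a r₀)
    (husub : ∀ x ∈ Ioo r₀ b,
      -A x * mfun lam Lam (u' x) - μ * u x + (x - r₀) ≤ mfun lam Lam (u'' x))
    {c : ℝ} (hc : 0 ≤ c) (h0 : u a = c * φ a) (h0' : u' a = c * φ' a) :
    c * φ b < u b := by
  have hAr₀ : ∀ x ∈ Ioo r₀ b, 0 ≤ A x := fun x hx => hA x (Ioo_subset_Ioo_left hr₀.1.le hx)
  obtain ⟨hr₀eq, hr₀eq'⟩ := radial_solution_unique hlam hlL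
    (fun x hx => hA x (Ioo_subset_Ioo_right hr₀.2.le hx)) (hu.mono le_rfl hr₀.2.le)
    ((hφ.const_mul c).mono le_rfl hr₀.2.le) hueq ((hφeq.const_mul hc).mono le_rfl hr₀.2.le)
    h0 h0' r₀ (right_mem_Icc.2 hr₀.1.le)
  have hφr₀ : φ r₀ ≠ 0 ∨ φ' r₀ ≠ 0 := by
    by_contra! hφ0
    have := radial_solution_unique hlam hlL hAr₀ (hφ.mono hr₀.1.le le_rfl)
      ((hφ.const_mul 0).mono hr₀.1.le le_rfl) (hφeq.mono hr₀.1.le le_rfl)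
      ((hφeq.const_mul le_rfl).mono hr₀.1.le le_rfl) (by simp [hφ0.1]) (by simp [hφ0.2])
      b (right_mem_Icc.2 hr₀.2.le)
    exact (hφpos b (right_mem_Ioc.2 hr₀.2)).ne' (this.1.trans (zero_mul _))
  exact lt_of_radial_subsolution hlam.le hlL hAr₀ hr₀.2 (hφ.mono hr₀.1.le le_rfl)
    (hφeq.mono hr₀.1.le le_rfl) hφpos hφr₀ (hu.mono hr₀.1.le le_rfl) husub hc hr₀eq
    hr₀eq'

end comparison

theorem lt_of_pucci_mixed {N : ℕ} (hN : 1 ≤ N) {lam Lam μ r₀ c : ℝ} {φ u : ℝ → ℝ}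
    (hlam : 0 < lam) (hlL : lam ≤ Lam) (hr₀ : r₀ ∈ Ioo (0:ℝ) 1)
    (hφreg : ContDiffOn ℝ 1 φ (Icc 0 1) ∧ ContDiffOn ℝ 2 φ (Ioc 0 1))
    (hφeq : ∀ r ∈ Ioc (0:ℝ) 1,
      D2 φ r = Mfun lam Lam (-(((N:ℝ) - 1) / r) * mfun lam Lam (D1 φ r) - μ * φ r))
    (hφ0' : D1 φ 0 = 0) (hφpos : ∀ r ∈ Ioc r₀ 1, 0 < φ r)
    (hu₁ : ContDiffOn ℝ 1 u (Icc 0 1)) (hu₂ : ContDiffOn ℝ 2 u (Ioc 0 1))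
    (hueq : ∀ r ∈ Ioc (0:ℝ) r₀, D2 u r =
      Mfun lam Lam (-(((N:ℝ) - 1) / r) * mfun lam Lam (D1 u r) - μ * u r + max (r - r₀) 0))
    (husub : ∀ r ∈ Ioc r₀ 1,
      Mfun lam Lam (-(((N:ℝ) - 1) / r) * mfun lam Lam (D1 u r) - μ * u r + max (r - r₀) 0)
        ≤ D2 u r)
    (hu0' : D1 u 0 = 0) (hc : 0 ≤ c) (h0 : u 0 = c * φ 0) :
    c * φ 1 < u 1 := by
  have hLam : 0 < Lam := hlam.trans_le hlL
  refine lt_of_radial_mixed (μ := μ) (A := fun r => ((N:ℝ) - 1) / r) hlam hlL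
    (fun x hx => div_nonneg (sub_nonneg.2 (by exact_mod_cast hN)) hx.1.le) hr₀
    (.of_contDiffOn hφreg.1 hφreg.2) (fun x hx => ?_) hφpos (.of_contDiffOn hu₁ hu₂)
    (fun x hx => ?_) (fun x hx => ?_) hc h0 (by rw [hu0', hφ0', mul_zero])
  · rw [hφeq x ⟨hx.1, hx.2.le⟩, mfun_Mfun hlam hLam]
  · rw [hueq x ⟨hx.1, hx.2.le⟩, mfun_Mfun hlam hLam, max_eq_right (by linarith [hx.2]),
      add_zero]
  · simpa [max_eq_left (sub_nonneg.2 hx.1.le)] using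
      le_mfun_of_Mfun_le hlam hlL (husub x ⟨hx.1, hx.2.le⟩)

theorem stmt_18_general (N : ℕ) (hN : 1 ≤ N) (lam Lam : ℝ) (hlam : 0 < lam) (hlL : lam ≤ Lam)
    (μ : ℝ)
    (φp φm : ℝ → ℝ)
    (hφpreg : ContDiffOn ℝ 1 φp (Set.Icc 0 1) ∧ ContDiffOn ℝ 2 φp (Set.Ioc 0 1))
    (hφmreg : ContDiffOn ℝ 1 φm (Set.Icc 0 1) ∧ ContDiffOn ℝ 2 φm (Set.Ioc 0 1))
    (hφpeq : ∀ r ∈ Set.Ioc (0:ℝ) 1,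
      D2 φp r = Mfun lam Lam (-(((N:ℝ) - 1) / r) * mfun lam Lam (D1 φp r) - μ * φp r))
    (hφmeq : ∀ r ∈ Set.Ioc (0:ℝ) 1,
      D2 φm r = Mfun lam Lam (-(((N:ℝ) - 1) / r) * mfun lam Lam (D1 φm r) - μ * φm r))
    (hφp0 : φp 0 = 1) (hφm0 : φm 0 = -1)
    (hφp0' : D1 φp 0 = 0) (hφm0' : D1 φm 0 = 0)
    (r₀ : ℝ) (hr₀ : r₀ ∈ Set.Ioo (0:ℝ) 1)
    (hpos : ∀ r ∈ Set.Ioc r₀ 1, 0 < φp r ∧ 0 < φm r) :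
    ∃ g : ℝ → ℝ, ContinuousOn g (Set.Icc 0 1) ∧
      ¬ ∃ u : ℝ → ℝ, ContDiffOn ℝ 1 u (Set.Icc 0 1) ∧ ContDiffOn ℝ 2 u (Set.Ioc 0 1) ∧
        (∀ r ∈ Set.Ioc (0:ℝ) r₀,
          D2 u r = Mfun lam Lam
            (-(((N:ℝ) - 1) / r) * mfun lam Lam (D1 u r) - μ * u r + g r)) ∧
        (∀ r ∈ Set.Ioc r₀ 1,
          Mfun lam Lam
            (-(((N:ℝ) - 1) / r) * mfun lam Lam (D1 u r) - μ * u r + g r) ≤ D2 u r) ∧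
        D1 u 0 = 0 ∧ u 1 = 0 := by
  refine ⟨fun r => max (r - r₀) 0, by fun_prop, ?_⟩
  rintro ⟨u, hu₁, hu₂, hueq, husub, hu0', hu1⟩
  rcases le_or_gt 0 (u 0) with hu0 | hu0
  · have := lt_of_pucci_mixed hN hlam hlL hr₀ hφpreg hφpeq hφp0' (fun r hr => (hpos r hr).1)
      hu₁ hu₂ hueq husub hu0' hu0 (by rw [hφp0, mul_one])
    nlinarith [(hpos 1 (right_mem_Ioc.2 hr₀.2)).1]
  · have := lt_of_pucci_mixed hN hlam hlL hr₀ hφmreg hφmeq hφm0' (fun r hr => (hpos r hr).2)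
      hu₁ hu₂ hueq husub hu0' (neg_nonneg.2 hu0.le) (by rw [hφm0, mul_neg_one, neg_neg])
    nlinarith [(hpos 1 (right_mem_Ioc.2 hr₀.2)).2]

/-- non-existence lemma: for `μ` strictly between `μ_k⁺` and `μ_k⁻`
there is a continuous right-hand side `g` for which the mixed equation/inequality
radial problem has no solution. -/
theorem stmt_18 (N : ℕ) (hN : 1 ≤ N) (lam Lam : ℝ) (hlam : 0 < lam) (hlL : lam ≤ Lam)
    (k : ℕ) (hk : 1 ≤ k) (μkp μkm μ : ℝ)
    (hkp : ∃ v : ℝ → ℝ, RadialEigen N lam Lam μkp v ∧ 0 < v 0 ∧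
      {r | r ∈ Set.Ioo (0:ℝ) 1 ∧ v r = 0}.ncard = k - 1)
    (hkm : ∃ v : ℝ → ℝ, RadialEigen N lam Lam μkm v ∧ v 0 < 0 ∧
      {r | r ∈ Set.Ioo (0:ℝ) 1 ∧ v r = 0}.ncard = k - 1)
    (hne : μkp ≠ μkm)
    (hμ : min μkp μkm < μ ∧ μ < max μkp μkm)
    (φp φm : ℝ → ℝ)
    (hφpreg : ContDiffOn ℝ 1 φp (Set.Icc 0 1) ∧ ContDiffOn ℝ 2 φp (Set.Ioc 0 1))
    (hφmreg : ContDiffOn ℝ 1 φm (Set.Icc 0 1) ∧ ContDiffOn ℝ 2 φm (Set.Ioc 0 1))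
    (hφpeq : ∀ r ∈ Set.Ioc (0:ℝ) 1,
      D2 φp r = Mfun lam Lam (-(((N:ℝ) - 1) / r) * mfun lam Lam (D1 φp r) - μ * φp r))
    (hφmeq : ∀ r ∈ Set.Ioc (0:ℝ) 1,
      D2 φm r = Mfun lam Lam (-(((N:ℝ) - 1) / r) * mfun lam Lam (D1 φm r) - μ * φm r))
    (hφp0 : φp 0 = 1) (hφm0 : φm 0 = -1)
    (hφp0' : D1 φp 0 = 0) (hφm0' : D1 φm 0 = 0)
    (r₀ : ℝ) (hr₀ : r₀ ∈ Set.Ioo (0:ℝ) 1)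
    (hpos : ∀ r ∈ Set.Ioc r₀ 1, 0 < φp r ∧ 0 < φm r) :
    ∃ g : ℝ → ℝ, ContinuousOn g (Set.Icc 0 1) ∧
      ¬ ∃ u : ℝ → ℝ, ContDiffOn ℝ 1 u (Set.Icc 0 1) ∧ ContDiffOn ℝ 2 u (Set.Ioc 0 1) ∧
        (∀ r ∈ Set.Ioc (0:ℝ) r₀,
          D2 u r = Mfun lam Lam
            (-(((N:ℝ) - 1) / r) * mfun lam Lam (D1 u r) - μ * u r + g r)) ∧
        (∀ r ∈ Set.Ioc r₀ 1,
          Mfun lam Lam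
            (-(((N:ℝ) - 1) / r) * mfun lam Lam (D1 u r) - μ * u r + g r) ≤ D2 u r) ∧
        D1 u 0 = 0 ∧ u 1 = 0 :=
  stmt_18_general N hN lam Lam hlam hlL μ φp φm hφpreg hφmreg hφpeq hφmeq hφp0 hφm0 hφp0' hφm0' r₀
    hr₀ hpos
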